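/- arXiv:1008.2975 — 5 statements merged into one kernel-verified Lean document; each statement's English description precedes it below -/
import Mathlib

section
/- Let α > −1 and let a_0, a_1, …, a_κ be real numbers satisfying the cut Laguerre recursion a_{j−1} − (2j+α+1−x)·a_j + (j+1)(j+α+1)·a_{j+1} = 0 for 0 ≤ j ≤ κ, with the conventions a_{−1} = 0 and a_{κ+1} = 0. Then a_j = a_0·Γ(α+1)·L_j^α(x) for all 0 ≤ j ≤ κ, and a nonzero solution exists if and only if L_{κ+1}^α(x) = 0, where L_n^α is the rescaled Laguerre polynomial 𝓛_n^α/Γ(n+α+1). -/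
/-!
Write `L_n^α(x) = ∑ₖ (-1)^k x^k / (k! Γ(k+α+1) Γ(n-k+1))`. Using only `1/Γ(s) = s/Γ(s+1)`,
the three-term Laguerre recurrence holds coefficient by coefficient, after shifting the index of
the `x · L_{n+1}^α` sum. In the cut recursion the coefficient `(j+1)(j+α+1)` of `a_{j+1}` is
nonzero, so a solution is determined by `a_0` and equals `a_0 Γ(α+1) L_j^α(x)`; the boundary
condition `a_{κ+1} = 0` then says exactly that `L_{κ+1}^α(x) = 0` or `a = 0`.
-/

open Real Finset

/-- Generalized Laguerre polynomial `𝓛_n^α(x)`. -/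
noncomputable def glag (α : ℝ) (n : ℕ) (x : ℝ) : ℝ :=
  ∑ k ∈ Finset.range (n + 1),
    (-1 : ℝ) ^ k * Real.Gamma ((n : ℝ) + α + 1) /
      (Real.Gamma ((k : ℝ) + α + 1) * (Nat.factorial (n - k) : ℝ) * (Nat.factorial k : ℝ)) * x ^ k

/-- Rescaled (Sonine) Laguerre polynomial `L_n^α(x) = 𝓛_n^α(x)/Γ(n+α+1)`. -/
noncomputable def slag (α : ℝ) (n : ℕ) (x : ℝ) : ℝ :=
  glag α n x / Real.Gamma ((n : ℝ) + α + 1)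

/-- Rescaled Laguerre polynomial with integer index, zero for negative index. -/
noncomputable def slagZ (α : ℝ) (m : ℤ) (x : ℝ) : ℝ :=
  if 0 ≤ m then slag α m.toNat x else 0

/-- The cut Laguerre recursion of order κ: the three-term relation holds for 0 ≤ j ≤ κ,
with the boundary conventions a₋₁ = 0 (built into the j = 0 equation) and a_{κ+1} = 0. -/
def CutRec (α x : ℝ) (κ : ℕ) (a : ℕ → ℝ) : Prop :=
  (-(α + 1 - x) * a 0 + (α + 1) * a 1 = 0) ∧
  (∀ j : ℕ, 1 ≤ j → j ≤ κ →
    a (j - 1) - (2 * (j : ℝ) + α + 1 - x) * a j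
      + ((j : ℝ) + 1) * ((j : ℝ) + α + 1) * a (j + 1) = 0) ∧
  a (κ + 1) = 0

theorem Real.one_div_Gamma_eq_self_mul_one_div_Gamma_add_one (s : ℝ) :
    (Gamma s)⁻¹ = s * (Gamma (s + 1))⁻¹ := by
  rcases ne_or_eq s 0 with hs | rfl
  · rw [Gamma_add_one hs, mul_inv, mul_inv_cancel_left₀ hs]
  · rw [zero_add, Gamma_zero, inv_zero, zero_mul]

theorem eq_zero_of_three_term {R : Type*} [Semiring R] [NoZeroDivisors R] {d p q r : ℕ → R}
    {N : ℕ} (hr : ∀ j, r j ≠ 0)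
    (hd : ∀ j, j + 2 ≤ N → p j * d j + q j * d (j + 1) + r j * d (j + 2) = 0)
    (h0 : d 0 = 0) (h1 : d 1 = 0) : ∀ j ≤ N, d j = 0 := by
  intro j
  induction j using Nat.twoStepInduction with
  | zero => exact fun _ => h0
  | one => exact fun _ => h1
  | more j ih ih' =>
    intro hj
    have h := hd j hj
    rw [ih (by omega), ih' (by omega), mul_zero, mul_zero, zero_add, zero_add] at h
    exact (mul_eq_zero.1 h).resolve_left (hr j)

/-- `Γ(n - k + 1)` replaces the `(n - k)!` of `glag`: at the poles `k > n` the term is `0`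
(as `x / 0 = 0`), so sums over any range containing `[0, n]` agree. -/
noncomputable def lagTerm (α x : ℝ) (n k : ℕ) : ℝ :=
  (-1) ^ k * x ^ k / ((k.factorial : ℝ) * Gamma (k + α + 1) * Gamma ((n : ℝ) - k + 1))

theorem lagTerm_eq_mul_lagTerm_succ (α x : ℝ) (n k : ℕ) :
    lagTerm α x n k = ((n : ℝ) + 1 - k) * lagTerm α x (n + 1) k := by
  have h : ((n + 1 : ℕ) : ℝ) - k + 1 = (n - k + 1) + 1 := by push_cast; ring
  simp only [lagTerm, h, div_eq_mul_inv, mul_inv]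
  rw [one_div_Gamma_eq_self_mul_one_div_Gamma_add_one ((n : ℝ) - k + 1)]
  ring

theorem mul_lagTerm (α x : ℝ) (n k : ℕ) :
    x * lagTerm α x n k = -(((k : ℝ) + 1) * (k + α + 1)) * lagTerm α x (n + 1) (k + 1) := by
  have h : ((n + 1 : ℕ) : ℝ) - (k + 1 : ℕ) + 1 = n - k + 1 := by push_cast; ring
  have h' : ((k + 1 : ℕ) : ℝ) + α + 1 = (k + α + 1) + 1 := by push_cast; ring
  simp only [lagTerm, h, h', div_eq_mul_inv, mul_inv, Nat.factorial_succ, Nat.cast_mul]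
  rw [one_div_Gamma_eq_self_mul_one_div_Gamma_add_one ((k : ℝ) + α + 1)]
  push_cast
  field_simp
  ring

theorem lagTerm_eq_zero_of_lt (α x : ℝ) {n k : ℕ} (h : n < k) : lagTerm α x n k = 0 := by
  obtain ⟨m, rfl⟩ := Nat.exists_eq_add_of_lt h
  have : ((n : ℝ) - (n + m + 1 : ℕ) + 1) = -(m : ℕ) := by push_cast; ring
  rw [lagTerm, this, Gamma_neg_nat_eq_zero, mul_zero, div_zero]

theorem slag_eq_sum_lagTerm {α : ℝ} {n : ℕ} (hΓ : Gamma (n + α + 1) ≠ 0) (x : ℝ) {N : ℕ}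
    (hN : n < N) : slag α n x = ∑ k ∈ range N, lagTerm α x n k := by
  rw [← sum_subset (range_subset_range.2 hN) fun k _ hk =>
    lagTerm_eq_zero_of_lt α x (by simpa using hk)]
  rw [slag, glag, sum_div]
  refine sum_congr rfl fun k hk => ?_
  have hk : k ≤ n := Nat.lt_succ_iff.1 (mem_range.1 hk)
  have h : (n : ℝ) - k + 1 = (n - k : ℕ) + 1 := by push_cast [hk]; ring
  rw [lagTerm, h, Gamma_nat_eq_factorial]
  field_simp

theorem lagTerm_three_term (α x : ℝ) (n k : ℕ) :
    lagTerm α x n k - (2 * ((n : ℝ) + 1) + α + 1) * lagTerm α x (n + 1) k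
      - k * (k + α) * lagTerm α x (n + 2) k
      + ((n : ℝ) + 2) * (n + α + 2) * lagTerm α x (n + 2) k = 0 := by
  rw [lagTerm_eq_mul_lagTerm_succ α x n k, lagTerm_eq_mul_lagTerm_succ α x (n + 1) k]
  push_cast
  ring

theorem mul_sum_lagTerm (α x : ℝ) {n N : ℕ} (hN : n + 1 < N) :
    x * ∑ k ∈ range N, lagTerm α x n k
      = -∑ k ∈ range N, (k : ℝ) * (k + α) * lagTerm α x (n + 1) k := by
  have hlast : (N : ℝ) * (N + α) * lagTerm α x (n + 1) N = 0 := by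
    rw [lagTerm_eq_zero_of_lt α x hN, mul_zero]
  calc x * ∑ k ∈ range N, lagTerm α x n k
      = -∑ k ∈ range N, ((k + 1 : ℕ) : ℝ) * ((k + 1 : ℕ) + α) * lagTerm α x (n + 1) (k + 1) := by
        rw [mul_sum, ← sum_neg_distrib]
        refine sum_congr rfl fun k _ => ?_
        rw [mul_lagTerm]
        push_cast
        ring
    _ = -∑ k ∈ range (N + 1), (k : ℝ) * (k + α) * lagTerm α x (n + 1) k := by
        simp [sum_range_succ' _ N]
    _ = -∑ k ∈ range N, (k : ℝ) * (k + α) * lagTerm α x (n + 1) k := by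
        rw [sum_range_succ, hlast, add_zero]

theorem slag_recurrence {α : ℝ} (hΓ : ∀ n : ℕ, Gamma (n + α + 1) ≠ 0) (x : ℝ) (n : ℕ) :
    slag α n x - (2 * ((n : ℝ) + 1) + α + 1 - x) * slag α (n + 1) x
      + ((n : ℝ) + 2) * (n + α + 2) * slag α (n + 2) x = 0 := by
  have hsum := sum_eq_zero fun k (_ : k ∈ range (n + 3)) => lagTerm_three_term α x n k
  rw [sum_add_distrib, sum_sub_distrib, sum_sub_distrib, ← mul_sum, ← mul_sum] at hsum
  rw [slag_eq_sum_lagTerm (hΓ n) x (N := n + 3) (by omega),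
    slag_eq_sum_lagTerm (hΓ (n + 1)) x (N := n + 3) (by omega),
    slag_eq_sum_lagTerm (hΓ (n + 2)) x (N := n + 3) (by omega)]
  linear_combination hsum + mul_sum_lagTerm α x (n := n + 1) (N := n + 3) (by omega)

theorem slag_recurrence_zero {α : ℝ} (hΓ : ∀ n : ℕ, Gamma (n + α + 1) ≠ 0) (x : ℝ) :
    -(α + 1 - x) * slag α 0 x + (α + 1) * slag α 1 x = 0 := by
  rw [slag_eq_sum_lagTerm (hΓ 0) x (N := 1) one_pos,
    slag_eq_sum_lagTerm (hΓ 1) x (N := 2) one_lt_two]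
  simp only [range_one, sum_singleton, sum_range_succ]
  linear_combination -(α + 1) * lagTerm_eq_mul_lagTerm_succ α x 0 0 + mul_lagTerm α x 0 0

theorem Gamma_mul_slag_zero {α : ℝ} (hΓ : Gamma (α + 1) ≠ 0) (x : ℝ) :
    Gamma (α + 1) * slag α 0 x = 1 := by
  rw [slag, glag]
  simp [hΓ]

theorem CutRec.eq_mul_slag {α x : ℝ} {κ : ℕ} {a : ℕ → ℝ} (hΓ : ∀ n : ℕ, Gamma (n + α + 1) ≠ 0)
    (ha : CutRec α x κ a) : ∀ j ≤ κ + 1, a j = a 0 * Gamma (α + 1) * slag α j x := by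
  obtain ⟨h0, hrec, -⟩ := ha
  have hΓ0 : Gamma (α + 1) ≠ 0 := by simpa using hΓ 0
  have hs0 := Gamma_mul_slag_zero hΓ0 x
  suffices h : ∀ j ≤ κ + 1, a j - a 0 * Gamma (α + 1) * slag α j x = 0 from
    fun j hj => sub_eq_zero.1 (h j hj)
  refine eq_zero_of_three_term (p := fun _ => 1) (q := fun j => -(2 * ((j : ℝ) + 1) + α + 1 - x))
    (r := fun j => ((j : ℝ) + 2) * (j + α + 2)) (fun j => ?_) (fun j hj => ?_) ?_ ?_
  · refine mul_ne_zero (by positivity) fun h => hΓ (j + 1) ?_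
    rw [Nat.cast_succ, show (j : ℝ) + 1 + α + 1 = j + α + 2 by ring, h, Gamma_zero]
  · have h := hrec (j + 1) (by omega) (by omega)
    rw [Nat.add_sub_cancel] at h
    push_cast at h
    linear_combination h - a 0 * Gamma (α + 1) * slag_recurrence hΓ x j
  · linear_combination -a 0 * hs0
  · have hα : α + 1 ≠ 0 := fun h => hΓ0 (by rw [h, Gamma_zero])
    refine (mul_eq_zero.1 ?_).resolve_left hα
    linear_combination
      h0 - a 0 * Gamma (α + 1) * slag_recurrence_zero hΓ x - (α + 1 - x) * a 0 * hs0

theorem cutRec_Gamma_mul_slag {α : ℝ} (hΓ : ∀ n : ℕ, Gamma (n + α + 1) ≠ 0) (x : ℝ) {κ : ℕ}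
    (h : slag α (κ + 1) x = 0) : CutRec α x κ (fun j => Gamma (α + 1) * slag α j x) := by
  refine ⟨by linear_combination Gamma (α + 1) * slag_recurrence_zero hΓ x, fun j hj _ => ?_,
    by simp [h]⟩
  obtain ⟨n, rfl⟩ := Nat.exists_eq_add_of_le' hj
  rw [Nat.add_sub_cancel]
  push_cast
  linear_combination Gamma (α + 1) * slag_recurrence hΓ x n

/-- Any solution of the cut Laguerre recursion is a₀·Γ(α+1)·L_j^α(x), and a nonzero solution
exists if and only if L_{κ+1}^α(x) = 0. -/
theorem cut_laguerre_recursion_solution (α x : ℝ) (hα : α > -1) (κ : ℕ) :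
    (∀ a : ℕ → ℝ, CutRec α x κ a →
      (∀ j ≤ κ, a j = a 0 * Real.Gamma (α + 1) * slag α j x) ∧
      ((∃ j ≤ κ, a j ≠ 0) → slag α (κ + 1) x = 0)) ∧
    (slag α (κ + 1) x = 0 →
      ∃ a : ℕ → ℝ, CutRec α x κ a ∧ ∃ j ≤ κ, a j ≠ 0) := by
  have hΓ : ∀ n : ℕ, Gamma (n + α + 1) ≠ 0 := fun n =>
    (Gamma_pos_of_pos (by linarith [(Nat.cast_nonneg n : (0 : ℝ) ≤ n)])).ne'
  have hΓ0 : Gamma (α + 1) ≠ 0 := by simpa using hΓ 0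
  refine ⟨fun a ha => ⟨fun j hj => ha.eq_mul_slag hΓ j (by omega), ?_⟩, fun h => ?_⟩
  · rintro ⟨j, hj, hja⟩
    have ha0 : a 0 ≠ 0 := fun h0 => hja (by simp [ha.eq_mul_slag hΓ j (by omega), h0])
    have hκ := ha.eq_mul_slag hΓ (κ + 1) le_rfl
    rw [ha.2.2, eq_comm, mul_eq_zero] at hκ
    exact hκ.resolve_left (mul_ne_zero ha0 hΓ0)
  · exact ⟨_, cutRec_Gamma_mul_slag hΓ x h, 0, κ.zero_le, by simp [Gamma_mul_slag_zero hΓ0 x]⟩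
end

section
/- Let α, β > −1 with k := (β−α)/2 a positive integer, and let χ ≠ 0 be real. Define a_j(x) := γ·L_{j−k}^β(x) for j ≥ k and a_j(x) := 0 for 0 ≤ j < k, where γ = 4χ/(β²−α²) and L_n^β = 𝓛_n^β/Γ(n+β+1). Then for all j ≥ 0 and all x, a_{j−1}(x) − (2j+α+1−x)·a_j(x) + (j+1)(j+α+1)·a_{j+1}(x) = χ·L_{j+1−k}^β(x), where a_{−1} := 0 and L_m^β := 0 for m < 0. -/
open Real Finset

lemma gamma_ne (β : ℝ) (hβ : β > -1) (i : ℕ) : Real.Gamma ((i:ℝ) + β + 1) ≠ 0 := by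
  have : (0:ℝ) < (i:ℝ) + β + 1 := by
    have := Nat.cast_nonneg (α := ℝ) i; linarith
  exact (Real.Gamma_pos_of_pos this).ne'

lemma slag_eq_sum (β : ℝ) (hβ : β > -1) (n : ℕ) (x : ℝ) :
    slag β n x = ∑ i ∈ Finset.range (n+1),
      (-1:ℝ)^i * x^i / (Real.Gamma ((i:ℝ)+β+1) * (Nat.factorial (n-i) : ℝ) * (Nat.factorial i : ℝ)) := by
  unfold slag glag
  rw [Finset.sum_div]
  refine Finset.sum_congr rfl fun i hi => ?_
  have h1 := gamma_ne β hβ n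
  have h2 := gamma_ne β hβ i
  have h3 : (Nat.factorial (n-i) : ℝ) ≠ 0 := Nat.cast_ne_zero.mpr (Nat.factorial_ne_zero _)
  have h4 : (Nat.factorial i : ℝ) ≠ 0 := Nat.cast_ne_zero.mpr (Nat.factorial_ne_zero _)
  field_simp

lemma slag_rec (β : ℝ) (hβ : β > -1) (m : ℕ) (x : ℝ) :
    slag β m x - (2*(m:ℝ)+β+3 - x) * slag β (m+1) x
      + ((m:ℝ)+2) * ((m:ℝ)+β+2) * slag β (m+2) x = 0 := by
  set F : ℕ → ℝ := fun i =>
    (-1:ℝ)^i * x^i / (Real.Gamma ((i:ℝ)+β+1) * (Nat.factorial (m+2-i) : ℝ) * (Nat.factorial i : ℝ)) with hF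
  have hfac : ∀ i : ℕ, (Nat.factorial i : ℝ) ≠ 0 :=
    fun i => Nat.cast_ne_zero.mpr (Nat.factorial_ne_zero _)
  have step4 : slag β (m+2) x = ∑ i ∈ Finset.range (m+3), F i := by
    rw [slag_eq_sum β hβ]
  have step3 : slag β (m+1) x = ∑ i ∈ Finset.range (m+3), ((m:ℝ)+2-(i:ℝ)) * F i := by
    have peel : ∑ i ∈ Finset.range (m+3), ((m:ℝ)+2-(i:ℝ)) * F i
        = ∑ i ∈ Finset.range (m+2), ((m:ℝ)+2-(i:ℝ)) * F i := by
      rw [show m+3 = (m+2)+1 by omega, Finset.sum_range_succ]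
      push_cast; ring
    rw [slag_eq_sum β hβ, peel]
    refine Finset.sum_congr rfl fun i hi => ?_
    have hi' : i ≤ m+1 := by simpa [Nat.lt_succ_iff] using Finset.mem_range.mp hi
    have hfacEq : ((Nat.factorial (m+2-i) : ℕ) : ℝ)
        = ((m+2-i : ℕ):ℝ) * ((Nat.factorial (m+1-i) : ℕ) : ℝ) := by
      rw [show m+2-i = (m+1-i)+1 by omega, Nat.factorial_succ, Nat.cast_mul,
        show (m+1-i)+1 = m+2-i by omega]
    have hcoef : ((m:ℝ)+2-(i:ℝ)) = ((m+2-i : ℕ):ℝ) := by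
      rw [Nat.cast_sub (by omega : i ≤ m+2)]; push_cast; ring
    have hcne : ((m+2-i : ℕ):ℝ) ≠ 0 := Nat.cast_ne_zero.mpr (by omega)
    have h2 := gamma_ne β hβ i
    rw [hF]
    simp only []
    rw [hfacEq, hcoef]
    field_simp
  have step1 : slag β m x = ∑ i ∈ Finset.range (m+3), (((m:ℝ)+2-(i:ℝ)) * ((m:ℝ)+1-(i:ℝ))) * F i := by
    have peel : ∑ i ∈ Finset.range (m+3), (((m:ℝ)+2-(i:ℝ)) * ((m:ℝ)+1-(i:ℝ))) * F i
        = ∑ i ∈ Finset.range (m+1), (((m:ℝ)+2-(i:ℝ)) * ((m:ℝ)+1-(i:ℝ))) * F i := by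
      rw [show m+3 = (m+2)+1 by omega, Finset.sum_range_succ,
        show m+2 = (m+1)+1 by omega, Finset.sum_range_succ]
      push_cast; ring
    rw [slag_eq_sum β hβ, peel]
    refine Finset.sum_congr rfl fun i hi => ?_
    have hi' : i ≤ m := by simpa [Nat.lt_succ_iff] using Finset.mem_range.mp hi
    have hfacEq : ((Nat.factorial (m+2-i) : ℕ) : ℝ)
        = ((m+2-i : ℕ):ℝ) * (((m+1-i : ℕ):ℝ) * ((Nat.factorial (m-i) : ℕ) : ℝ)) := by
      rw [show m+2-i = ((m-i)+1)+1 by omega, Nat.factorial_succ, Nat.factorial_succ,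
        Nat.cast_mul, Nat.cast_mul, show (m-i)+1+1 = m+2-i by omega, show (m-i)+1 = m+1-i by omega]
    have hcoef1 : ((m:ℝ)+2-(i:ℝ)) = ((m+2-i : ℕ):ℝ) := by
      rw [Nat.cast_sub (by omega : i ≤ m+2)]; push_cast; ring
    have hcoef2 : ((m:ℝ)+1-(i:ℝ)) = ((m+1-i : ℕ):ℝ) := by
      rw [Nat.cast_sub (by omega : i ≤ m+1)]; push_cast; ring
    have hcne1 : ((m+2-i : ℕ):ℝ) ≠ 0 := Nat.cast_ne_zero.mpr (by omega)
    have hcne2 : ((m+1-i : ℕ):ℝ) ≠ 0 := Nat.cast_ne_zero.mpr (by omega)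
    have h2 := gamma_ne β hβ i
    rw [hF]
    simp only []
    rw [hfacEq, hcoef1, hcoef2]
    field_simp
  have step2 : x * slag β (m+1) x = ∑ i ∈ Finset.range (m+3), (-((i:ℝ)*((i:ℝ)+β))) * F i := by
    have peel : ∑ i ∈ Finset.range (m+3), (-((i:ℝ)*((i:ℝ)+β))) * F i
        = ∑ i ∈ Finset.range (m+2), (-(((i+1:ℕ):ℝ)*(((i+1:ℕ):ℝ)+β))) * F (i+1) := by
      rw [show m+3 = (m+2)+1 by omega, Finset.sum_range_succ']
      norm_num
    rw [peel, slag_eq_sum β hβ, Finset.mul_sum]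
    refine Finset.sum_congr rfl fun i hi => ?_
    have hi' : i ≤ m+1 := by simpa [Nat.lt_succ_iff] using Finset.mem_range.mp hi
    have h2 := gamma_ne β hβ i
    have h2' : (i:ℝ)+β+1 ≠ 0 := by
      have := Nat.cast_nonneg (α := ℝ) i; intro h'; linarith
    have hg : Real.Gamma (((i+1:ℕ):ℝ)+β+1) = ((i:ℝ)+β+1) * Real.Gamma ((i:ℝ)+β+1) := by
      have h : (((i+1:ℕ):ℝ)+β+1) = ((i:ℝ)+β+1)+1 := by push_cast; ring
      rw [h, Real.Gamma_add_one h2']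
    have hsub : m+2-(i+1) = m+1-i := by omega
    have hfacEq : ((Nat.factorial (i+1) : ℕ) : ℝ) = ((i+1:ℕ):ℝ) * ((Nat.factorial i : ℕ) : ℝ) := by
      rw [Nat.factorial_succ, Nat.cast_mul]
    have hc1 : ((i+1:ℕ):ℝ) = (i:ℝ)+1 := by push_cast; ring
    have hone : (i:ℝ)+1 ≠ 0 := by positivity
    have hpow1 : ((-1:ℝ))^(i+1) = -(-1:ℝ)^i := by rw [pow_succ]; ring
    have hpow2 : x^(i+1) = x * x^i := by rw [pow_succ]; ring
    rw [hF]
    simp only []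
    rw [hsub, hg, hfacEq, hc1, hpow1, hpow2]
    field_simp
    ring
  have hsplit : slag β m x - (2*(m:ℝ)+β+3 - x) * slag β (m+1) x
      + ((m:ℝ)+2) * ((m:ℝ)+β+2) * slag β (m+2) x
      = slag β m x - (2*(m:ℝ)+β+3) * slag β (m+1) x + x * slag β (m+1) x
        + ((m:ℝ)+2) * ((m:ℝ)+β+2) * slag β (m+2) x := by ring
  rw [hsplit, step2, step1, step3, step4, Finset.mul_sum, Finset.mul_sum,
    ← Finset.sum_sub_distrib, ← Finset.sum_add_distrib, ← Finset.sum_add_distrib]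
  exact Finset.sum_eq_zero fun i hi => by ring

lemma slag_recZ (β : ℝ) (hβ : β > -1) (n : ℕ) (x : ℝ) :
    slagZ β ((n:ℤ)-1) x - (2*(n:ℝ)+β+1-x) * slag β n x
      + ((n:ℝ)+1)*((n:ℝ)+β+1) * slag β (n+1) x = 0 := by
  cases n with
  | zero =>
    simp only [Nat.cast_zero]
    have hz : slagZ β ((0:ℤ)-1) x = 0 := by simp [slagZ]
    rw [hz]
    have hne : (β+1:ℝ) ≠ 0 := by intro h'; linarith
    have hG : Real.Gamma (β+1) ≠ 0 := by
      have := gamma_ne β hβ 0; simpa using this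
    have h0 : slag β 0 x = 1 / Real.Gamma (β+1) := by
      rw [slag_eq_sum β hβ 0 x]
      norm_num
    have h1 : slag β 1 x = 1 / Real.Gamma (β+1) - x / ((β+1) * Real.Gamma (β+1)) := by
      rw [slag_eq_sum β hβ 1 x]
      simp only [Finset.sum_range_succ, Finset.sum_range_zero]
      have e1 : Real.Gamma (((1:ℕ):ℝ)+β+1) = (β+1) * Real.Gamma (β+1) := by
        rw [show ((1:ℕ):ℝ)+β+1 = (β+1)+1 by push_cast; ring, Real.Gamma_add_one hne]
      rw [e1]
      norm_num [Nat.factorial]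
      ring
    rw [h0, h1]
    field_simp
    ring
  | succ m =>
    have hz : slagZ β (((m+1:ℕ):ℤ)-1) x = slag β m x := by
      have : (((m+1:ℕ):ℤ)-1) = (m:ℤ) := by push_cast; ring
      rw [this]; simp [slagZ]
    rw [hz]
    have := slag_rec β hβ m x
    push_cast
    push_cast at this
    linarith [this]

/-- Explicit solution of the inhomogeneous Laguerre recursion with source χ·L_{j+1−k}^β:
with γ = 4χ/(β²−α²), the sequence a_j = γ·L_{j−k}^β(x) (vanishing for j < k) satisfies
a_{j−1} − (2j+α+1−x)a_j + (j+1)(j+α+1)a_{j+1} = χ·L_{j+1−k}^β(x) for all j ≥ 0. -/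
theorem inhomogeneous_laguerre_solution (α β : ℝ) (hα : α > -1) (hβ : β > -1)
    (k : ℕ) (hk : 0 < k) (hβα : β = α + 2 * (k : ℝ)) (χ : ℝ) (hχ : χ ≠ 0) (x : ℝ)
    (a : ℤ → ℝ)
    (ha : ∀ j : ℤ, a j = if j < (k : ℤ) then 0
      else (4 * χ / (β ^ 2 - α ^ 2)) * slagZ β (j - (k : ℤ)) x) :
    ∀ j : ℕ, a ((j : ℤ) - 1) - (2 * (j : ℝ) + α + 1 - x) * a (j : ℤ)
      + ((j : ℝ) + 1) * ((j : ℝ) + α + 1) * a ((j : ℤ) + 1)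
      = χ * slagZ β ((j : ℤ) + 1 - (k : ℤ)) x := by
  intro j
  have hαk : (0:ℝ) < α + k := by
    have : (1:ℝ) ≤ (k:ℝ) := by exact_mod_cast hk
    linarith
  have hsq : β ^ 2 - α ^ 2 = 4 * (k:ℝ) * (α + k) := by rw [hβα]; ring
  have hsqne : β ^ 2 - α ^ 2 ≠ 0 := by
    rw [hsq]
    have hk' : (0:ℝ) < (k:ℝ) := by exact_mod_cast hk
    positivity
  set γ : ℝ := 4 * χ / (β ^ 2 - α ^ 2) with hγdef
  have hγ : γ * ((k:ℝ) * (α + k)) = χ := by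
    rw [hγdef, hsq]
    field_simp
  by_cases h1 : j + 1 < k
  · -- everything vanishes
    have e1 : a ((j:ℤ) - 1) = 0 := by rw [ha]; rw [if_pos (by omega)]
    have e2 : a (j:ℤ) = 0 := by rw [ha]; rw [if_pos (by omega)]
    have e3 : a ((j:ℤ) + 1) = 0 := by rw [ha]; rw [if_pos (by omega)]
    have e4 : slagZ β ((j:ℤ) + 1 - (k:ℤ)) x = 0 := by
      rw [slagZ, if_neg (by omega)]
    rw [e1, e2, e3, e4]
    ring
  · by_cases h2 : j + 1 = k
    · -- boundary case
      have e1 : a ((j:ℤ) - 1) = 0 := by rw [ha]; rw [if_pos (by omega)]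
      have e2 : a (j:ℤ) = 0 := by rw [ha]; rw [if_pos (by omega)]
      have e3 : a ((j:ℤ) + 1) = γ * slagZ β 0 x := by
        rw [ha, if_neg (by omega), show (j:ℤ) + 1 - (k:ℤ) = 0 by omega]
      have e4 : slagZ β ((j:ℤ) + 1 - (k:ℤ)) x = slagZ β 0 x := by
        rw [show (j:ℤ) + 1 - (k:ℤ) = 0 by omega]
      rw [e1, e2, e3, e4]
      have hjk : (j:ℝ) + 1 = (k:ℝ) := by exact_mod_cast congrArg (Nat.cast : ℕ → ℝ) h2
      have hcoef : ((j:ℝ) + 1) * ((j:ℝ) + α + 1) = (k:ℝ) * (α + k) := by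
        rw [show (j:ℝ) + α + 1 = ((j:ℝ)+1) + α by ring, hjk]; ring
      rw [hcoef]
      linear_combination slagZ β 0 x * hγ
    · -- j ≥ k
      have hjk : k ≤ j := by omega
      obtain ⟨n, hn⟩ : ∃ n : ℕ, j = n + k := ⟨j - k, by omega⟩
      subst hn
      have e2 : a ((n+k : ℕ):ℤ) = γ * slag β n x := by
        rw [ha, if_neg (by omega)]
        congr 1
        rw [slagZ, if_pos (by omega)]
        congr 1
        omega
      have e3 : a (((n+k : ℕ):ℤ) + 1) = γ * slag β (n+1) x := by
        rw [ha, if_neg (by omega)]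
        congr 1
        rw [slagZ, if_pos (by omega)]
        congr 1
        omega
      have e1 : a (((n+k : ℕ):ℤ) - 1) = γ * slagZ β ((n:ℤ) - 1) x := by
        rw [ha]
        rcases Nat.eq_zero_or_pos n with hn0 | hn0
        · subst hn0
          rw [if_pos (by omega)]
          rw [show ((0:ℕ):ℤ) - 1 = -1 by norm_num, slagZ, if_neg (by norm_num)]
          ring
        · rw [if_neg (by omega)]
          congr 1
          congr 1
          omega
      have e4 : slagZ β (((n+k : ℕ):ℤ) + 1 - (k:ℤ)) x = slag β (n+1) x := by
        rw [slagZ, if_pos (by omega)]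
        congr 1
        omega
      rw [e1, e2, e3, e4]
      have hrec := slag_recZ β hβ n x
      push_cast
      linear_combination γ * hrec + slag β (n+1) x * hγ
        + (γ * slag β n x - ((n:ℝ)+1) * γ * slag β (n+1) x) * hβα
end

section
/- For α > −1, d ≥ 1, and x a root of 𝓛_d^α: ∑_{m=0}^{d−1} (m!/Γ(m+α+1))·(𝓛_m^α(x))² = −(d!/Γ(d+α))·𝓛_{d−1}^α(x)·(d/dx 𝓛_d^α)(x), and since (d/dx)𝓛_d^α = −𝓛_{d−1}^{α+1}, this equals (d!/Γ(d+α))·𝓛_{d−1}^α(x)·𝓛_{d−1}^{α+1}(x). -/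
open Real Finset

lemma gam_pos {α : ℝ} (hα : α > -1) (n : ℕ) : 0 < Real.Gamma ((n:ℝ) + α + 1) := by
  apply Real.Gamma_pos_of_pos
  have : (0:ℝ) ≤ n := n.cast_nonneg
  linarith

lemma glag_zero {α : ℝ} (hα : α > -1) (x : ℝ) : glag α 0 x = 1 := by
  have h := (gam_pos hα 0).ne'
  simp [glag, div_self, h] at h ⊢
  field_simp
  exact h

lemma glag_one {α : ℝ} (hα : α > -1) (x : ℝ) : glag α 1 x = α + 1 - x := by
  have h0 : Real.Gamma (α+1) ≠ 0 := by
    have := gam_pos hα 0; push_cast at this; rw [show (0:ℝ)+α+1 = α+1 by ring] at this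
    exact this.ne'
  simp only [glag, Finset.sum_range_succ, Finset.sum_range_zero]
  push_cast
  norm_num [Nat.factorial]
  rw [show (1:ℝ)+α+1 = (α+1)+1 by ring, Real.Gamma_add_one (by linarith)]
  have ha1 : α + 1 ≠ 0 := by linarith
  field_simp
  ring

lemma hasDerivAt_glag {α : ℝ} (hα : α > -1) (n : ℕ) (x : ℝ) :
    HasDerivAt (fun t => glag α (n+1) t) (-(glag (α+1) n x)) x := by
  have H : HasDerivAt (fun t => glag α (n+1) t)
      (∑ k ∈ Finset.range (n+2),
        (-1 : ℝ) ^ k * Real.Gamma (((n+1 : ℕ) : ℝ) + α + 1) /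
          (Real.Gamma ((k : ℝ) + α + 1) * (Nat.factorial (n+1 - k) : ℝ) * (Nat.factorial k : ℝ))
          * ((k : ℝ) * x ^ (k-1))) x := by
    simp only [glag]
    apply HasDerivAt.fun_sum
    intro k hk
    exact (hasDerivAt_pow k x).const_mul _
  convert H using 1
  rw [Finset.sum_range_succ' _ (n+1)]
  simp only [Nat.cast_zero, zero_mul, mul_zero, add_zero]
  rw [glag, ← Finset.sum_neg_distrib]
  apply Finset.sum_congr rfl
  intro j hj
  have hfj : (Nat.factorial j : ℝ) ≠ 0 := by exact_mod_cast j.factorial_ne_zero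
  have hfj1 : (Nat.factorial (j+1) : ℝ) ≠ 0 := by exact_mod_cast (j+1).factorial_ne_zero
  have e1 : ((n:ℝ)) + (α+1) + 1 = ((n+1:ℕ):ℝ) + α + 1 := by push_cast; ring
  have e2 : ((j:ℝ)) + (α+1) + 1 = ((j+1:ℕ):ℝ) + α + 1 := by push_cast; ring
  have hg : Real.Gamma ((j:ℝ) + 1 + α + 1) ≠ 0 := by
    have := (gam_pos hα (j+1)).ne'; push_cast at this; exact this
  have hF : ((Nat.factorial (n-j) : ℕ) : ℝ) ≠ 0 := by exact_mod_cast (n-j).factorial_ne_zero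
  have hfs : ((Nat.factorial (j+1) : ℕ) : ℝ) = ((j:ℝ)+1) * (Nat.factorial j : ℝ) := by
    rw [Nat.factorial_succ]; push_cast; ring
  have key : ∀ A B F f1 f2 y : ℝ, f2 = ((j:ℝ)+1) * f1 → B ≠ 0 → F ≠ 0 → f1 ≠ 0 →
      (-1:ℝ)^(j+1) * A / (B * F * f2) * (((j:ℝ)+1) * y) = -((-1:ℝ)^j * A / (B * F * f1) * y) := by
    intro A B F f1 f2 y h hB hF1 hf1
    subst h
    have hj1 : ((j:ℝ)+1) ≠ 0 := by positivity
    field_simp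
    ring
  rw [e1, e2, Nat.succ_sub_succ]
  simp only [Nat.add_sub_cancel]
  push_cast
  exact (key _ _ _ _ _ _ hfs hg hF hfj).symm

noncomputable def co (α : ℝ) (m k : ℕ) : ℝ :=
  (-1:ℝ)^k * Real.Gamma ((m:ℝ)+α+1) /
    (Real.Gamma ((k:ℝ)+α+1) * ((Nat.factorial (m-k)):ℝ) * ((Nat.factorial k):ℝ))

lemma glag_eq (α : ℝ) (m : ℕ) (x : ℝ) :
    glag α m x = ∑ k ∈ Finset.range (m+1), co α m k * x^k := rfl

set_option maxHeartbeats 2000000 in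
lemma co_rec {α : ℝ} (hα : α > -1) (n k : ℕ) (hk : k < n+3) :
    ((n:ℝ)+2) * co α (n+2) k
      = (if k ≤ n+1 then (2*(n:ℝ)+3+α) * co α (n+1) k else 0)
        - (if k = 0 then 0 else co α (n+1) (k-1))
        - (if k ≤ n then ((n:ℝ)+1+α) * co α n k else 0) := by
  have h0 : (0:ℝ) ≤ (n:ℝ) := n.cast_nonneg
  have hga : Real.Gamma (α+1) ≠ 0 := (Real.Gamma_pos_of_pos (by linarith)).ne'
  have hgn : Real.Gamma ((n:ℝ)+α+1) ≠ 0 := by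
    have := (gam_pos hα n).ne'; exact this
  have g1 : Real.Gamma ((n:ℝ)+1+α+1) = ((n:ℝ)+α+1) * Real.Gamma ((n:ℝ)+α+1) := by
    rw [show (n:ℝ)+1+α+1 = ((n:ℝ)+α+1)+1 by ring, Real.Gamma_add_one (by linarith)]
  have g2 : Real.Gamma ((n:ℝ)+2+α+1) = ((n:ℝ)+1+α+1) * (((n:ℝ)+α+1) * Real.Gamma ((n:ℝ)+α+1)) := by
    rw [show (n:ℝ)+2+α+1 = ((n:ℝ)+1+α+1)+1 by ring, Real.Gamma_add_one (by linarith), g1]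
  have hfn : ((Nat.factorial n : ℕ):ℝ) ≠ 0 := by exact_mod_cast n.factorial_ne_zero
  have f1 : ((Nat.factorial (n+1) : ℕ):ℝ) = ((n:ℝ)+1) * (Nat.factorial n : ℝ) := by
    rw [Nat.factorial_succ]; push_cast; ring
  have f2 : ((Nat.factorial (n+2) : ℕ):ℝ) = ((n:ℝ)+2) * (((n:ℝ)+1) * (Nat.factorial n : ℝ)) := by
    rw [Nat.factorial_succ, Nat.factorial_succ]; push_cast; ring
  by_cases hk0 : k = 0
  · subst hk0
    simp only [if_pos (by omega : 0 ≤ n+1), if_pos rfl, if_pos (Nat.zero_le n)]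
    simp only [co, Nat.sub_zero, Nat.factorial_zero, Nat.cast_one, pow_zero, mul_one,
      Nat.cast_zero, one_mul, zero_add]
    push_cast
    rw [g2, g1, f1, f2]
    field_simp
    ring
  · by_cases hkn2 : k = n+2
    · subst hkn2
      rw [if_neg (by omega : ¬ n+2 ≤ n+1), if_neg (by omega : ¬ n+2 ≤ n)]
      have hA : Real.Gamma (((n+2:ℕ):ℝ)+α+1) ≠ 0 := (gam_pos hα (n+2)).ne'
      have hB : Real.Gamma (((n+1:ℕ):ℝ)+α+1) ≠ 0 := (gam_pos hα (n+1)).ne'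
      have hf1 : ((Nat.factorial (n+1) : ℕ):ℝ) ≠ 0 := by exact_mod_cast (n+1).factorial_ne_zero
      have f2' : ((Nat.factorial (n+2) : ℕ):ℝ) = ((n:ℝ)+2) * (Nat.factorial (n+1) : ℝ) := by
        rw [Nat.factorial_succ (n+1)]; push_cast; ring
      simp only [co, Nat.sub_self, Nat.factorial_zero, Nat.cast_one, mul_one,
        show n+2-1 = n+1 from rfl]
      rw [f2']
      have e : ∀ A B f : ℝ, A ≠ 0 → B ≠ 0 → f ≠ 0 →
          ((n:ℝ)+2) * ((-1:ℝ)^(n+2) * A / (A * (((n:ℝ)+2)*f)))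
            = 0 - (-1:ℝ)^(n+1) * B / (B * f) - 0 := by
        intros A B f hA' hB' hf'
        have : ((n:ℝ)+2) ≠ 0 := by linarith
        field_simp
        ring
      exact e _ _ _ hA hB hf1
    · by_cases hkn1 : k = n+1
      · subst hkn1
        rw [if_pos (le_refl (n+1)), if_neg (by omega : ¬ n+1 = 0), if_neg (by omega : ¬ n+1 ≤ n)]
        have hB : Real.Gamma (((n+1:ℕ):ℝ)+α+1) ≠ 0 := (gam_pos hα (n+1)).ne'
        have hf1 : ((Nat.factorial (n+1) : ℕ):ℝ) ≠ 0 := by exact_mod_cast (n+1).factorial_ne_zero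
        have gg2 : Real.Gamma (((n+2:ℕ):ℝ)+α+1) = ((n:ℝ)+α+2) * Real.Gamma (((n+1:ℕ):ℝ)+α+1) := by
          push_cast
          rw [show (n:ℝ)+2+α+1 = ((n:ℝ)+1+α+1)+1 by ring, Real.Gamma_add_one (by linarith)]
          ring
        have gg1 : Real.Gamma (((n+1:ℕ):ℝ)+α+1) = ((n:ℝ)+α+1) * Real.Gamma ((n:ℝ)+α+1) := by
          push_cast
          rw [show (n:ℝ)+1+α+1 = ((n:ℝ)+α+1)+1 by ring, Real.Gamma_add_one (by linarith)]
        have hs1 : ((n:ℝ)+α+1) ≠ 0 := by linarith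
        have hs2 : ((n:ℝ)+α+2) ≠ 0 := by linarith
        have hn1 : ((n:ℝ)+1) ≠ 0 := by linarith
        simp only [co, Nat.sub_self, Nat.factorial_zero, Nat.cast_one, mul_one,
          show n+2-(n+1) = 1 from by omega, show n+1-1 = n from rfl,
          show n+1-n = 1 from by omega, Nat.factorial_one]
        rw [gg2, gg1, f1, pow_succ]
        field_simp
        ring
      · -- generic: 1 ≤ k ≤ n
        obtain ⟨j, rfl⟩ : ∃ j, k = j + 1 := ⟨k-1, by omega⟩
        obtain ⟨i, rfl⟩ : ∃ i, n = j + 1 + i := ⟨n-j-1, by omega⟩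
        rw [if_pos (by omega), if_neg (by omega), if_pos (by omega)]
        have hj0 : (0:ℝ) ≤ (j:ℝ) := j.cast_nonneg
        have hi0 : (0:ℝ) ≤ (i:ℝ) := i.cast_nonneg
        have hGJ : Real.Gamma ((j:ℝ)+α+1) ≠ 0 := (gam_pos hα j).ne'
        have hGN : Real.Gamma (((j+1+i:ℕ):ℝ)+α+1) ≠ 0 := (gam_pos hα (j+1+i)).ne'
        have hfi : ((Nat.factorial i : ℕ):ℝ) ≠ 0 := by exact_mod_cast i.factorial_ne_zero
        have hfj : ((Nat.factorial j : ℕ):ℝ) ≠ 0 := by exact_mod_cast j.factorial_ne_zero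
        have G2 : Real.Gamma (((j+1+i+2:ℕ):ℝ)+α+1)
            = ((j:ℝ)+1+(i:ℝ)+α+2) * (((j:ℝ)+1+(i:ℝ)+α+1) * Real.Gamma (((j+1+i:ℕ):ℝ)+α+1)) := by
          push_cast
          rw [show (j:ℝ)+1+(i:ℝ)+2+α+1 = (((j:ℝ)+1+(i:ℝ)+α+1)+1)+1 by ring,
            Real.Gamma_add_one (by linarith), Real.Gamma_add_one (by linarith)]
          ring
        have G1 : Real.Gamma (((j+1+i+1:ℕ):ℝ)+α+1)
            = ((j:ℝ)+1+(i:ℝ)+α+1) * Real.Gamma (((j+1+i:ℕ):ℝ)+α+1) := by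
          push_cast
          rw [show (j:ℝ)+1+(i:ℝ)+1+α+1 = ((j:ℝ)+1+(i:ℝ)+α+1)+1 by ring,
            Real.Gamma_add_one (by linarith)]
        have GK : Real.Gamma (((j+1:ℕ):ℝ)+α+1) = ((j:ℝ)+α+1) * Real.Gamma ((j:ℝ)+α+1) := by
          push_cast
          rw [show (j:ℝ)+1+α+1 = ((j:ℝ)+α+1)+1 by ring, Real.Gamma_add_one (by linarith)]
        have F2 : ((Nat.factorial (i+2) : ℕ):ℝ) = ((i:ℝ)+2) * (((i:ℝ)+1) * (Nat.factorial i : ℝ)) := by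
          rw [Nat.factorial_succ, Nat.factorial_succ]; push_cast; ring
        have F1 : ((Nat.factorial (i+1) : ℕ):ℝ) = ((i:ℝ)+1) * (Nat.factorial i : ℝ) := by
          rw [Nat.factorial_succ]; push_cast; ring
        have FJ : ((Nat.factorial (j+1) : ℕ):ℝ) = ((j:ℝ)+1) * (Nat.factorial j : ℝ) := by
          rw [Nat.factorial_succ]; push_cast; ring
        have hs1 : ((j:ℝ)+α+1) ≠ 0 := by linarith
        have hs2 : ((j:ℝ)+1+(i:ℝ)+α+1) ≠ 0 := by linarith
        have hs3 : ((j:ℝ)+1+(i:ℝ)+α+2) ≠ 0 := by linarith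
        have hs4 : ((i:ℝ)+1) ≠ 0 := by linarith
        have hs5 : ((i:ℝ)+2) ≠ 0 := by linarith
        have hs6 : ((j:ℝ)+1) ≠ 0 := by linarith
        have s1 : j+1+i+2-(j+1) = i+2 := by omega
        have s2 : j+1+i+1-(j+1) = i+1 := by omega
        have s3 : j+1-1 = j := rfl
        have s4 : j+1+i+1-j = i+2 := by omega
        have s5 : j+1+i-(j+1) = i := by omega
        simp only [co, s1, s2, s3, s4, s5]
        rw [G2, G1, GK, F2, F1, FJ, pow_succ]
        push_cast
        field_simp
        ring

lemma glag_rec {α : ℝ} (hα : α > -1) (n : ℕ) (x : ℝ) :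
    ((n:ℝ)+2) * glag α (n+2) x
      = (2*(n:ℝ)+3+α-x) * glag α (n+1) x - ((n:ℝ)+1+α) * glag α n x := by
  have E0 : ((n:ℝ)+2) * glag α (n+2) x
      = ∑ k ∈ Finset.range (n+3), (((n:ℝ)+2) * co α (n+2) k) * x^k := by
    rw [glag_eq, Finset.mul_sum]
    exact Finset.sum_congr rfl fun k _ => by ring
  have E1 : (2*(n:ℝ)+3+α) * glag α (n+1) x
      = ∑ k ∈ Finset.range (n+3), (if k ≤ n+1 then (2*(n:ℝ)+3+α) * co α (n+1) k else 0) * x^k := by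
    rw [glag_eq, Finset.mul_sum]
    conv_rhs => rw [Finset.sum_range_succ]
    rw [if_neg (by omega : ¬ n+2 ≤ n+1), zero_mul, add_zero]
    refine Finset.sum_congr rfl fun k hk => ?_
    rw [if_pos (by have := Finset.mem_range.mp hk; omega : k ≤ n+1)]; ring
  have E2 : x * glag α (n+1) x
      = ∑ k ∈ Finset.range (n+3), (if k = 0 then 0 else co α (n+1) (k-1)) * x^k := by
    rw [glag_eq, Finset.mul_sum]
    conv_rhs => rw [Finset.sum_range_succ' _ (n+2)]
    simp only [Nat.add_sub_cancel, Nat.succ_ne_zero, if_false, reduceIte, zero_mul, add_zero]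
    exact Finset.sum_congr rfl fun k _ => by ring
  have E3 : ((n:ℝ)+1+α) * glag α n x
      = ∑ k ∈ Finset.range (n+3), (if k ≤ n then ((n:ℝ)+1+α) * co α n k else 0) * x^k := by
    rw [glag_eq, Finset.mul_sum]
    conv_rhs => rw [Finset.sum_range_succ, Finset.sum_range_succ]
    rw [if_neg (by omega : ¬ n+2 ≤ n), if_neg (by omega : ¬ n+1 ≤ n), zero_mul, add_zero,
      zero_mul, add_zero]
    refine Finset.sum_congr rfl fun k hk => ?_
    rw [if_pos (by have := Finset.mem_range.mp hk; omega : k ≤ n)]; ring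
  have : (2*(n:ℝ)+3+α-x) * glag α (n+1) x - ((n:ℝ)+1+α) * glag α n x
      = ((2*(n:ℝ)+3+α) * glag α (n+1) x) - (x * glag α (n+1) x)
        - (((n:ℝ)+1+α) * glag α n x) := by ring
  rw [this, E0, E1, E2, E3, ← Finset.sum_sub_distrib, ← Finset.sum_sub_distrib]
  refine Finset.sum_congr rfl fun k hk => ?_
  have hco := co_rec hα n k (Finset.mem_range.mp hk)
  linear_combination x^k * hco

noncomputable def Dg (α : ℝ) (n : ℕ) (x : ℝ) : ℝ :=
  if n = 0 then 0 else -(glag (α+1) (n-1) x)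

lemma hasDerivAt_glag' {α : ℝ} (hα : α > -1) (n : ℕ) (x : ℝ) :
    HasDerivAt (fun t => glag α n t) (Dg α n x) x := by
  cases n with
  | zero =>
      have : (fun t => glag α 0 t) = fun _ => (1:ℝ) := funext fun t => glag_zero hα t
      rw [this]
      simpa [Dg] using hasDerivAt_const x (1:ℝ)
  | succ m => simpa [Dg] using hasDerivAt_glag hα m x

lemma Dg_rec {α : ℝ} (hα : α > -1) (n : ℕ) (x : ℝ) :
    ((n:ℝ)+2) * Dg α (n+2) x
      = (-1) * glag α (n+1) x + (2*(n:ℝ)+3+α-x) * Dg α (n+1) x - ((n:ℝ)+1+α) * Dg α n x := by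
  have h1 : HasDerivAt (fun t => ((n:ℝ)+2) * glag α (n+2) t) (((n:ℝ)+2) * Dg α (n+2) x) x :=
    (hasDerivAt_glag' hα (n+2) x).const_mul _
  have ha : HasDerivAt (fun t : ℝ => 2*(n:ℝ)+3+α-t) (-1) x := by
    simpa using (hasDerivAt_id x).const_sub (2*(n:ℝ)+3+α)
  have h2 : HasDerivAt (fun t => (2*(n:ℝ)+3+α-t) * glag α (n+1) t - ((n:ℝ)+1+α) * glag α n t)
      ((-1) * glag α (n+1) x + (2*(n:ℝ)+3+α-x) * Dg α (n+1) x - ((n:ℝ)+1+α) * Dg α n x) x :=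
    (ha.mul (hasDerivAt_glag' hα (n+1) x)).sub ((hasDerivAt_glag' hα n x).const_mul _)
  have hfun : (fun t => ((n:ℝ)+2) * glag α (n+2) t)
      = (fun t => (2*(n:ℝ)+3+α-t) * glag α (n+1) t - ((n:ℝ)+1+α) * glag α n t) :=
    funext fun t => glag_rec hα n t
  rw [hfun] at h1
  exact h1.unique h2

lemma cd {α : ℝ} (hα : α > -1) (n : ℕ) (x : ℝ) :
    ∑ m ∈ Finset.range (n+1),
        ((Nat.factorial m : ℝ) / Real.Gamma ((m : ℝ) + α + 1)) * (glag α m x) ^ 2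
      = ((Nat.factorial (n+1) : ℝ) / Real.Gamma ((n:ℝ)+1+α)) *
          (Dg α n x * glag α (n+1) x - Dg α (n+1) x * glag α n x) := by
  induction n with
  | zero =>
      rw [show (0:ℕ)+1 = 1 from rfl]
      simp only [Finset.sum_range_one, Nat.factorial_zero, Nat.factorial_one, Nat.cast_zero,
        Nat.cast_one, Dg, reduceIte, show (1:ℕ)-1 = 0 from rfl]
      rw [glag_zero hα, glag_zero (by linarith : α+1 > -1)]
      rw [show (0:ℝ)+α+1 = 1+α by ring, show (0:ℝ)+1+α = 1+α by ring]
      norm_num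
  | succ n ih =>
      rw [Finset.sum_range_succ, ih]
      have hg : Real.Gamma ((n:ℝ)+1+α) ≠ 0 := by
        rw [show (n:ℝ)+1+α = (n:ℝ)+α+1 by ring]; exact (gam_pos hα n).ne'
      have hA : ((n:ℝ)+1+α) ≠ 0 := by
        have : (0:ℝ) ≤ (n:ℝ) := n.cast_nonneg; linarith
      have gEq : Real.Gamma ((((n+1:ℕ)):ℝ)+1+α) = ((n:ℝ)+1+α) * Real.Gamma ((n:ℝ)+1+α) := by
        push_cast
        rw [show (n:ℝ)+1+1+α = ((n:ℝ)+1+α)+1 by ring, Real.Gamma_add_one hA]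
      have gEq2 : Real.Gamma ((((n+1:ℕ)):ℝ)+α+1) = ((n:ℝ)+1+α) * Real.Gamma ((n:ℝ)+1+α) := by
        push_cast
        rw [show (n:ℝ)+1+α+1 = ((n:ℝ)+1+α)+1 by ring, Real.Gamma_add_one hA]
      have fEq : ((Nat.factorial (n+2) : ℕ):ℝ) = ((n:ℝ)+2) * (Nat.factorial (n+1) : ℝ) := by
        rw [Nat.factorial_succ (n+1)]; push_cast; ring
      rw [gEq, gEq2, show n+1+1 = n+2 from rfl, fEq]
      have hrec := glag_rec hα n x
      have hdrec := Dg_rec hα n x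
      have hkey : ((n:ℝ)+1+α) * (Dg α n x * glag α (n+1) x - Dg α (n+1) x * glag α n x)
            + (glag α (n+1) x)^2
          = ((n:ℝ)+2) * (Dg α (n+1) x * glag α (n+2) x - Dg α (n+2) x * glag α (n+1) x) := by
        linear_combination (-(Dg α (n+1) x)) * hrec + (glag α (n+1) x) * hdrec
      have e : ((Nat.factorial (n+1) : ℕ):ℝ) / Real.Gamma ((n:ℝ)+1+α)
          = (((Nat.factorial (n+1) : ℕ):ℝ) * ((n:ℝ)+1+α))
            / (((n:ℝ)+1+α) * Real.Gamma ((n:ℝ)+1+α)) := by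
        rw [mul_comm ((n:ℝ)+1+α), mul_div_mul_right _ _ hA]
      rw [e]
      linear_combination (((Nat.factorial (n+1) : ℕ):ℝ)
        / (((n:ℝ)+1+α) * Real.Gamma ((n:ℝ)+1+α))) * hkey

/-- Norm of a cut-Fock-space eigenvector: at a root x of 𝓛_d^α,
∑_{m<d} (m!/Γ(m+α+1))·𝓛_m^α(x)² = −(d!/Γ(d+α))·𝓛_{d−1}^α(x)·(𝓛_d^α)'(x)
                                 = (d!/Γ(d+α))·𝓛_{d−1}^α(x)·𝓛_{d−1}^{α+1}(x). -/
theorem laguerre_root_squared_norm (α : ℝ) (hα : α > -1) (d : ℕ) (hd : 1 ≤ d)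
    (x : ℝ) (hx : glag α d x = 0) :
    (∑ m ∈ Finset.range d,
        ((Nat.factorial m : ℝ) / Real.Gamma ((m : ℝ) + α + 1)) * (glag α m x) ^ 2
      = -((Nat.factorial d : ℝ) / Real.Gamma ((d : ℝ) + α)) * glag α (d - 1) x *
          deriv (fun t => glag α d t) x) ∧
    (∑ m ∈ Finset.range d,
        ((Nat.factorial m : ℝ) / Real.Gamma ((m : ℝ) + α + 1)) * (glag α m x) ^ 2
      = ((Nat.factorial d : ℝ) / Real.Gamma ((d : ℝ) + α)) * glag α (d - 1) x *
          glag (α + 1) (d - 1) x) := by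
  obtain ⟨n, rfl⟩ : ∃ n, d = n + 1 := ⟨d - 1, by omega⟩
  have hcd := cd hα n x
  rw [hx] at hcd
  have hder : deriv (fun t => glag α (n+1) t) x = Dg α (n+1) x :=
    (hasDerivAt_glag' hα (n+1) x).deriv
  have hDg : Dg α (n+1) x = -(glag (α+1) n x) := by simp [Dg]
  have hgam : Real.Gamma (((n+1:ℕ):ℝ) + α) = Real.Gamma ((n:ℝ)+1+α) := by push_cast; ring_nf
  constructor
  · rw [show n+1-1 = n from rfl, hder, hcd, hgam, hDg]
    ring
  · rw [show n+1-1 = n from rfl, hcd, hgam, hDg]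
    ring
end

section
/- Consider a triangular system of m+1 coupled cut Laguerre recursions: for 0 ≤ i ≤ m−1, a^i_{j−1} − (2j+α_i+1−x)·a^i_j + (j+1)(j+α_i+1)·a^i_{j+1} − χ_i·a^{i+1}_{j+q_i} = 0, together with the uncoupled top recursion a^m_{j−1} − (2j+α_m+1−x)·a^m_j + (j+1)(j+α_m+1)·a^m_{j+1} = 0 for 0 ≤ j ≤ κ with boundary zero conditions. Suppose k_i := (α_m − α_i)/2 are positive integers for i < m (k_m := 0) and q_i = 1 − k_i + k_{i+1}. If x is a root of L^{α_m}_{κ+1}, then setting a^i_j(x) = a^m_0·Γ_{m−1,i}·Γ(α_m+1)·L^{α_m}_{j−k_i}(x) (with L^{α_m}_n := 0 for n < 0 and Γ_{m−1,i} := ∏_{t=i}^{m−1} 4χ_t/(α_m²−α_t²), Γ_{m−1,m} := 1) yields a nontrivial solution of the entire system. -/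
open Real Finset

/-- The coefficient of `x ^ j` in `L_n^α(x)` is `(-1) ^ j * laguerreTerm α n j`. -/
noncomputable def laguerreTerm (α n s : ℝ) : ℝ :=
  (Gamma (s + 1) * Gamma (s + α + 1) * Gamma (n - s + 1))⁻¹

theorem laguerreTerm_recurrence (α n s : ℝ) :
    laguerreTerm α (n - 1) s - (2 * n + α + 1) * laguerreTerm α n s
      + (n + 1) * (n + α + 1) * laguerreTerm α (n + 1) s - laguerreTerm α n (s - 1) = 0 := by
  have shift := Real.one_div_Gamma_eq_self_mul_one_div_Gamma_add_one
  have h₁ : (Gamma (n - 1 - s + 1))⁻¹ = (n - s) * (n - s + 1) * (Gamma (n + 1 - s + 1))⁻¹ := by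
    rw [shift, shift, mul_assoc]; ring_nf
  have h₂ : (Gamma (n - s + 1))⁻¹ = (n - s + 1) * (Gamma (n + 1 - s + 1))⁻¹ := by
    rw [shift]; ring_nf
  have h₃ : (Gamma (s - 1 + 1))⁻¹ = s * (Gamma (s + 1))⁻¹ := by
    rw [sub_add_cancel, shift]
  have h₄ : (Gamma (s - 1 + α + 1))⁻¹ = (s + α) * (Gamma (s + α + 1))⁻¹ := by
    rw [show s - 1 + α + 1 = s + α by ring, shift]
  have h₅ : n - (s - 1) + 1 = n + 1 - s + 1 := by ring
  simp only [laguerreTerm, mul_inv, h₁, h₂, h₃, h₄, h₅]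
  ring

theorem laguerreTerm_neg_one (α n : ℝ) : laguerreTerm α n (-1) = 0 := by
  rw [laguerreTerm, neg_add_cancel, Gamma_zero, zero_mul, zero_mul, inv_zero]

theorem laguerreTerm_eq_zero_of_lt (α : ℝ) {n : ℤ} {j : ℕ} (h : n < j) :
    laguerreTerm α n j = 0 := by
  obtain ⟨d, hd⟩ : ∃ d : ℕ, (j : ℤ) = n + d + 1 := ⟨(j - n - 1).toNat, by omega⟩
  have hneg : (n : ℝ) - j + 1 = -d := by
    rw [show (j : ℝ) = ((j : ℤ) : ℝ) by norm_cast, hd]; push_cast; ring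
  rw [laguerreTerm, hneg, Gamma_neg_nat_eq_zero, mul_zero, inv_zero]

theorem slag_eq_sum_laguerreTerm {α : ℝ} (hα : -1 < α) (n : ℕ) (x : ℝ) :
    slag α n x = ∑ j ∈ range (n + 1), (-1) ^ j * laguerreTerm α n j * x ^ j := by
  have hΓ : Gamma (n + α + 1) ≠ 0 := (Gamma_pos_of_pos (by linarith [n.cast_nonneg (α := ℝ)])).ne'
  rw [slag, glag, sum_div]
  refine sum_congr rfl fun j hj => ?_
  have hjn : j ≤ n := Nat.lt_succ_iff.mp (mem_range.mp hj)
  rw [laguerreTerm, show (n : ℝ) - j + 1 = (n - j : ℕ) + 1 by push_cast [hjn]; ring,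
    Gamma_nat_eq_factorial, Gamma_nat_eq_factorial]
  field_simp

theorem slagZ_natCast (α : ℝ) (n : ℕ) (x : ℝ) : slagZ α n x = slag α n x := by
  rw [slagZ, if_pos (Int.natCast_nonneg n), Int.toNat_natCast]

theorem slag_zero (α x : ℝ) : slag α 0 x = (Gamma (α + 1))⁻¹ := by
  simp [slag, glag, div_div, div_self_mul_self']

theorem slagZ_eq_sum_laguerreTerm {α : ℝ} (hα : -1 < α) {n : ℤ} {N : ℕ} (hN : n < N) (x : ℝ) :
    slagZ α n x = ∑ j ∈ range N, (-1) ^ j * laguerreTerm α n j * x ^ j := by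
  have vanish : ∀ j : ℕ, n < j → (-1) ^ j * laguerreTerm α n j * x ^ j = 0 := fun j hj => by
    rw [laguerreTerm_eq_zero_of_lt α hj, mul_zero, zero_mul]
  rcases lt_or_ge n 0 with hn | hn
  · rw [slagZ, if_neg hn.not_ge]
    exact (sum_eq_zero fun j _ => vanish j (by omega)).symm
  · lift n to ℕ using hn
    rw [slagZ_natCast, slag_eq_sum_laguerreTerm hα]
    push_cast at vanish ⊢
    refine sum_subset (range_subset_range.mpr (by omega)) fun j _ hj => vanish j ?_
    simp only [mem_range, not_lt] at hj
    omega

theorem slagZ_recurrence {α : ℝ} (hα : -1 < α) (n : ℤ) (x : ℝ) :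
    slagZ α (n - 1) x - (2 * n + α + 1 - x) * slagZ α n x
      + (n + 1) * (n + α + 1) * slagZ α (n + 1) x = 0 := by
  set N := (n + 1).toNat + 1
  have hshift : ∑ j ∈ range (N + 1), (-1) ^ j * laguerreTerm α n ((j : ℝ) - 1) * x ^ j
      = -(x * slagZ α n x) := by
    rw [sum_range_succ', slagZ_eq_sum_laguerreTerm hα (show n < N by omega), mul_sum,
      ← sum_neg_distrib]
    simp only [Nat.cast_zero, zero_sub, laguerreTerm_neg_one, Nat.cast_succ,
      add_sub_cancel_right, mul_zero, zero_mul, add_zero]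
    exact sum_congr rfl fun j _ => by ring
  have hterm : ∀ j ∈ range (N + 1), (-1) ^ j * laguerreTerm α (n - 1 : ℤ) j * x ^ j
      - (2 * n + α + 1) * ((-1) ^ j * laguerreTerm α n j * x ^ j)
      + (n + 1) * (n + α + 1) * ((-1) ^ j * laguerreTerm α (n + 1 : ℤ) j * x ^ j)
      - (-1) ^ j * laguerreTerm α n ((j : ℝ) - 1) * x ^ j = 0 := fun j _ => by
    push_cast
    linear_combination (-1) ^ j * x ^ j * laguerreTerm_recurrence α n j
  have hsum := sum_eq_zero hterm
  simp only [sum_sub_distrib, sum_add_distrib, ← mul_sum] at hsum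
  rw [slagZ_eq_sum_laguerreTerm hα (show n - 1 < N + 1 by omega),
    slagZ_eq_sum_laguerreTerm hα (show n + 1 < N + 1 by omega)]
  linear_combination hsum + hshift
    - (2 * n + α + 1) * slagZ_eq_sum_laguerreTerm hα (show n < N + 1 by omega) x

theorem slagZ_recurrence_of_shift {α β : ℝ} (hβ : -1 < β) {k : ℤ} (hαβ : β = α + 2 * k)
    (j : ℤ) (x : ℝ) :
    slagZ β (j - 1 - k) x - (2 * j + α + 1 - x) * slagZ β (j - k) x
      + (j + 1) * (j + α + 1) * slagZ β (j + 1 - k) x = k * (α + k) * slagZ β (j + 1 - k) x := by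
  subst hαβ
  have h := slagZ_recurrence hβ (j - k) x
  rw [show j - k - 1 = j - 1 - k by ring, show j - k + 1 = j + 1 - k by ring] at h
  push_cast at h
  linear_combination h

/-- Theorem 1 (th.trzecie): explicit solution of a triangular chain of m+1 coupled cut
Laguerre recursions. If kᵢ = (α_m−αᵢ)/2 are positive integers, qᵢ = 1−kᵢ+k_{i+1}, and x is
a root of L^{α_m}_{κ+1}, then aⁱ_j = a₀·(∏_{t=i}^{m−1} 4χ_t/(α_m²−α_t²))·Γ(α_m+1)·
L^{α_m}_{j−kᵢ}(x) solves all the coupled recursions (with L^{α_m}_n = 0 for n < 0), the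
boundary condition aᵐ_{κ+1} = 0 holds, and the solution is nontrivial when a₀ ≠ 0. -/
theorem coupled_cut_laguerre_chain_solution (m κ : ℕ) (α χ : ℕ → ℝ) (k : ℕ → ℕ)
    (hα : ∀ i ≤ m, α i > -1)
    (hk : ∀ i < m, 0 < k i) (hkm : k m = 0)
    (hαk : ∀ i < m, α m = α i + 2 * (k i : ℝ))
    (x : ℝ) (hroot : slag (α m) (κ + 1) x = 0)
    (a0 : ℝ) (a : ℕ → ℤ → ℝ)
    (ha : ∀ i ≤ m, ∀ j : ℤ,
      a i j = a0 * (∏ t ∈ Finset.Ico i m, 4 * χ t / ((α m) ^ 2 - (α t) ^ 2)) *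
        Real.Gamma (α m + 1) * slagZ (α m) (j - (k i : ℤ)) x) :
    (∀ i < m, ∀ j : ℤ, 0 ≤ j →
      a i (j - 1) - (2 * (j : ℝ) + α i + 1 - x) * a i j
        + ((j : ℝ) + 1) * ((j : ℝ) + α i + 1) * a i (j + 1)
        - χ i * a (i + 1) (j + (1 - (k i : ℤ) + (k (i + 1) : ℤ))) = 0) ∧
    (∀ j : ℤ, 0 ≤ j →
      a m (j - 1) - (2 * (j : ℝ) + α m + 1 - x) * a m j
        + ((j : ℝ) + 1) * ((j : ℝ) + α m + 1) * a m (j + 1) = 0) ∧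
    a m ((κ : ℤ) + 1) = 0 ∧
    (a0 ≠ 0 → ∃ i ≤ m, ∃ j : ℤ, a i j ≠ 0) := by
  have hαm : -1 < α m := hα m le_rfl
  set P : ℕ → ℝ := fun i => ∏ t ∈ Ico i m, 4 * χ t / (α m ^ 2 - α t ^ 2) with hP
  have hlink : ∀ i < m, P i * (k i * (α i + k i)) = χ i * P (i + 1) := fun i hi => by
    have hD : α m ^ 2 - α i ^ 2 = 4 * (k i * (α i + k i)) := by rw [hαk i hi]; ring
    have hki : (1 : ℝ) ≤ k i := by exact_mod_cast hk i hi
    have hne : α i + k i ≠ 0 := by linarith [hα i hi.le]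
    simp only [hP]
    rw [prod_eq_prod_Ico_succ_bot hi, hD]
    field_simp
  have ha' : ∀ i ≤ m, ∀ j : ℤ, a i j = a0 * P i * Gamma (α m + 1) * slagZ (α m) (j - k i) x := ha
  refine ⟨fun i hi j _ => ?_, fun j _ => ?_, ?_, fun ha0 => ⟨m, le_rfl, 0, ?_⟩⟩
  · rw [ha' i hi.le, ha' i hi.le, ha' i hi.le, ha' (i + 1) hi,
      show j + (1 - k i + k (i + 1)) - k (i + 1) = j + 1 - k i by ring]
    linear_combination a0 * P i * Gamma (α m + 1)
        * slagZ_recurrence_of_shift hαm (k := k i) (by exact_mod_cast hαk i hi) j x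
      + a0 * Gamma (α m + 1) * slagZ (α m) (j + 1 - k i) x * hlink i hi
  · rw [ha' m le_rfl, ha' m le_rfl, ha' m le_rfl, hkm]
    simp only [Nat.cast_zero, sub_zero]
    linear_combination a0 * P m * Gamma (α m + 1) * slagZ_recurrence hαm j x
  · rw [ha' m le_rfl, hkm, show (κ : ℤ) + 1 - (0 : ℕ) = (κ + 1 : ℕ) by push_cast; ring,
      slagZ_natCast, hroot, mul_zero]
  · rw [ha' m le_rfl, hkm, Nat.cast_zero, sub_self]
    simp [slagZ, slag_zero, hP, (Gamma_pos_of_pos (by linarith : 0 < α m + 1)).ne', ha0]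
end

section
/- For the sequence γ_t = −(1/3)·(t+1)(2t+1)/((2κ+1)²−(2t+1)²) with 0 ≤ t ≤ κ−1, the partial products P_t := ∏_{p=t}^{κ−1} γ_p satisfy the recursion P_t = γ_t · P_{t+1} with P_κ = 1, and the closed form P_t = (−24)^{t−κ}·(κ+t)!/((κ−t)!·(2t)!) holds; in particular P_0 = (−24)^{−κ}. -/
open Real Finset

lemma gamma_aux (κ : ℕ) (γ P : ℕ → ℝ)
    (hγ : ∀ t, γ t = -(1 / 3) * (((t : ℝ) + 1) * (2 * (t : ℝ) + 1)) /
      ((2 * (κ : ℝ) + 1) ^ 2 - (2 * (t : ℝ) + 1) ^ 2))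
    (hP : ∀ t, P t = ∏ p ∈ Finset.Ico t κ, γ p) :
    ∀ d t, t + d = κ → P t = (-24 : ℝ) ^ ((t : ℤ) - (κ : ℤ)) * (Nat.factorial (κ + t) : ℝ) /
      ((Nat.factorial (κ - t) : ℝ) * (Nat.factorial (2 * t) : ℝ)) := by
  intro d
  induction d with
  | zero =>
    intro t ht
    simp only [Nat.add_zero] at ht
    subst ht
    rw [hP, Finset.Ico_self, Finset.prod_empty]
    rw [two_mul]
    have : (Nat.factorial (t + t) : ℝ) ≠ 0 := Nat.cast_ne_zero.mpr (Nat.factorial_ne_zero _)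
    simp [Nat.sub_self, div_self this]
  | succ d ih =>
    intro t ht
    have hκ : κ = t + d + 1 := by omega
    subst hκ
    have hrec : P t = γ t * P (t + 1) := by
      rw [hP t, hP (t + 1), ← Finset.prod_eq_prod_Ico_succ_bot (by omega)]
    have hIH := ih (t + 1) (by omega)
    rw [hrec, hIH, hγ t]
    -- simplify factorial and subtraction expressions
    have h1 : t + d + 1 + (t + 1) = (t + d + 1 + t) + 1 := by ring
    have h2 : t + d + 1 - (t + 1) = d := by omega
    have h3 : t + d + 1 - t = d + 1 := by omega
    have h4 : 2 * (t + 1) = (2 * t + 1) + 1 := by ring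
    rw [h1, h2, h3, h4, Nat.factorial_succ (t+d+1+t),
      Nat.factorial_succ (2*t+1), Nat.factorial_succ (2*t), Nat.factorial_succ d]
    have he : ((t : ℤ) + 1) - ((t : ℤ) + (d : ℤ) + 1) = ((t : ℤ) - ((t : ℤ) + (d : ℤ) + 1)) + 1 := by ring
    have he2 : (((t+1 : ℕ)) : ℤ) - (((t+d+1 : ℕ)) : ℤ) = ((t : ℤ) - (((t+d+1 : ℕ)) : ℤ)) + 1 := by
      push_cast; ring
    rw [he2, zpow_add_one₀ (by norm_num : (-24 : ℝ) ≠ 0)]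
    have hD : ((2 * ((t:ℕ)+(d:ℕ)+1 : ℕ) + 1 : ℝ)) ^ 2 - (2 * (t : ℝ) + 1) ^ 2 =
        4 * ((d : ℝ) + 1) * (2 * (t : ℝ) + (d : ℝ) + 2) := by push_cast; ring
    have hDne : ((2 * (((t+d+1 : ℕ)) : ℝ) + 1) ^ 2 - (2 * (t : ℝ) + 1) ^ 2) ≠ 0 := by
      push_cast
      nlinarith [Nat.cast_nonneg (α := ℝ) t, Nat.cast_nonneg (α := ℝ) d]
    have hfd : (Nat.factorial d : ℝ) ≠ 0 := Nat.cast_ne_zero.mpr (Nat.factorial_ne_zero d)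
    have hf2t : (Nat.factorial (2*t) : ℝ) ≠ 0 := Nat.cast_ne_zero.mpr (Nat.factorial_ne_zero _)
    rw [hD]
    set Z : ℝ := (-24 : ℝ) ^ ((t : ℤ) - (((t+d+1 : ℕ)) : ℤ)) with hZ
    have hd1 : ((d : ℝ) + 1) ≠ 0 := by positivity
    have hd2 : (2 * (t : ℝ) + (d : ℝ) + 2) ≠ 0 := by positivity
    push_cast
    field_simp
    ring

/-- For γ_t = −(1/3)(t+1)(2t+1)/((2κ+1)²−(2t+1)²), the partial products
P_t = ∏_{p=t}^{κ−1} γ_p satisfy P_κ = 1, P_t = γ_t·P_{t+1}, the closed form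
P_t = (−24)^{t−κ}(κ+t)!/((κ−t)!(2t)!), and in particular P_0 = (−24)^{−κ}. -/
theorem gamma_even_partial_products (κ : ℕ) (hκ : 1 ≤ κ) (γ P : ℕ → ℝ)
    (hγ : ∀ t, γ t = -(1 / 3) * (((t : ℝ) + 1) * (2 * (t : ℝ) + 1)) /
      ((2 * (κ : ℝ) + 1) ^ 2 - (2 * (t : ℝ) + 1) ^ 2))
    (hP : ∀ t, P t = ∏ p ∈ Finset.Ico t κ, γ p) :
    P κ = 1 ∧
    (∀ t < κ, P t = γ t * P (t + 1)) ∧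
    (∀ t < κ, P t = (-24 : ℝ) ^ ((t : ℤ) - (κ : ℤ)) * (Nat.factorial (κ + t) : ℝ) /
      ((Nat.factorial (κ - t) : ℝ) * (Nat.factorial (2 * t) : ℝ))) ∧
    P 0 = (-24 : ℝ) ^ (-(κ : ℤ)) := by
  have aux := gamma_aux κ γ P hγ hP
  refine ⟨?_, ?_, ?_, ?_⟩
  · rw [hP, Finset.Ico_self, Finset.prod_empty]
  · intro t htκ
    rw [hP t, hP (t + 1), ← Finset.prod_eq_prod_Ico_succ_bot htκ]
  · intro t htκ
    exact aux (κ - t) t (by omega)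
  · have := aux κ 0 (by omega)
    rw [this]
    have hfκ : (Nat.factorial κ : ℝ) ≠ 0 := Nat.cast_ne_zero.mpr (Nat.factorial_ne_zero _)
    simp [mul_div_assoc, div_self hfκ, zpow_neg]
end
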